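/- arXiv:2211.04030 — 3 statements merged into one kernel-verified Lean document; each statement's English description precedes it below -/
import Mathlib

section
/- Let Λ be a finite-dimensional algebra over an algebraically closed field k, let I be an ideal of Λ contained in (Z(Λ) ∩ J(Λ))·Λ, and let S be a brick over Λ (End_Λ(S) ≅ k). Then IS = 0, i.e., S is naturally a Λ/I-module. -/
/-- Let `Λ` be a finite-dimensional algebra over an algebraically closed
field `k`, let `I` be a (two-sided) ideal of `Λ` contained in `(Z(Λ) ∩ J(Λ))·Λ`, and let
`S` be a brick over `Λ` (i.e. `End_Λ(S) ≅ k`).  Then `IS = 0`, i.e. `S` is naturally a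
`Λ/I`-module. -/
theorem stmt_1 (k : Type*) [Field k] [IsAlgClosed k]
    (Λ : Type*) [Ring Λ] [Algebra k Λ] [FiniteDimensional k Λ]
    (I : TwoSidedIdeal Λ)
    (hI : ∀ x ∈ I, x ∈ Ideal.span
      ((Subring.center Λ : Set Λ) ∩ (((⊥ : Ideal Λ).jacobson : Ideal Λ) : Set Λ)))
    (S : Type*) [AddCommGroup S] [Module k S] [Module Λ S] [IsScalarTower k Λ S]
    [FiniteDimensional k S]
    (hS : Nonempty (Module.End Λ S ≃ₐ[k] k)) :
    ∀ x ∈ I, ∀ s : S, x • s = 0 := by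
  obtain ⟨e⟩ := hS
  have key : ∀ z ∈ (Subring.center Λ : Set Λ) ∩ (((⊥ : Ideal Λ).jacobson : Ideal Λ) : Set Λ),
      ∀ s : S, z • s = 0 := by
    rintro z ⟨hzc, hzj⟩ s
    have hcomm : ∀ a : Λ, a * z = z * a := Subring.mem_center_iff.mp hzc
    let f : Module.End Λ S :=
      { toFun := fun t => z • t
        map_add' := fun a b => smul_add z a b
        map_smul' := fun a t => by
          simp only [RingHom.id_apply]
          rw [← mul_smul, ← mul_smul, hcomm] }
    set c : k := e f with hc
    have hf : f = algebraMap k (Module.End Λ S) c := by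
      apply e.injective
      rw [AlgEquiv.commutes]
      simp [hc]
    have hzs : ∀ t : S, z • t = c • t := by
      intro t
      have := congrArg (fun g : Module.End Λ S => g t) hf
      simpa [Module.algebraMap_end_apply, f] using this
    by_cases hc0 : c = 0
    · rw [hzs s, hc0, zero_smul]
    · -- the element `1 + (-c⁻¹) • z` is left-invertible but kills `s`, so `s = 0`
      obtain ⟨w, hw⟩ := Ideal.mem_jacobson_iff.mp hzj (algebraMap k Λ (-c⁻¹))
      rw [Ideal.mem_bot, sub_eq_zero] at hw
      have hkill : (algebraMap k Λ (-c⁻¹) * z + 1) • s = 0 := by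
        rw [add_smul, one_smul, mul_smul, hzs s, algebraMap_smul, smul_smul]
        rw [neg_mul, inv_mul_cancel₀ hc0]
        simp
      have hs0 : s = 0 := by
        have : (w * (algebraMap k Λ (-c⁻¹) * z + 1)) • s = s := by
          have h1 : w * (algebraMap k Λ (-c⁻¹) * z + 1)
              = w * algebraMap k Λ (-c⁻¹) * z + w := by
            rw [mul_add, mul_one, ← mul_assoc]
          rw [h1, hw, one_smul]
        rw [mul_smul, hkill, smul_zero] at this
        exact this.symm
      rw [hs0, smul_zero]
  intro x hx s
  have hx' := hI x hx
  clear hx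
  induction hx' using Submodule.span_induction with
  | mem z hz => exact key z hz s
  | zero => exact zero_smul Λ s
  | add a b _ _ ha hb => rw [add_smul, ha, hb, add_zero]
  | smul a x _ hx => rw [smul_eq_mul, mul_smul, hx, smul_zero]
end

section
/- Let Λ be a finite-dimensional algebra over an algebraically closed field k, and let S = S₁ ⊕ ⋯ ⊕ S_t be a semibrick over Λ (each S_i a brick, Hom_Λ(S_i, S_j) = 0 for i ≠ j). If I ⊆ (Z(Λ) ∩ J(Λ))·Λ is an ideal, then IS = 0. -/
/-- Let `Λ` be a finite-dimensional algebra over an algebraically closed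
field `k`, and let `S = S₁ ⊕ ⋯ ⊕ S_t` be a semibrick over `Λ` (each `S i` is a brick and
`Hom_Λ(S i, S j) = 0` for `i ≠ j`).  If `I ⊆ (Z(Λ) ∩ J(Λ))·Λ` is a (two-sided) ideal,
then `IS = 0` (equivalently, `I` annihilates each summand `S i`). -/
theorem stmt_2 (k : Type*) [Field k] [IsAlgClosed k]
    (Λ : Type*) [Ring Λ] [Algebra k Λ] [FiniteDimensional k Λ]
    (I : TwoSidedIdeal Λ)
    (hI : ∀ x ∈ I, x ∈ Ideal.span
      ((Subring.center Λ : Set Λ) ∩ (((⊥ : Ideal Λ).jacobson : Ideal Λ) : Set Λ)))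
    (t : ℕ) (S : Fin t → Type*)
    [∀ i, AddCommGroup (S i)] [∀ i, Module k (S i)] [∀ i, Module Λ (S i)]
    [∀ i, IsScalarTower k Λ (S i)] [∀ i, FiniteDimensional k (S i)]
    (hbrick : ∀ i, Nonempty (Module.End Λ (S i) ≃ₐ[k] k))
    (horth : ∀ i j, i ≠ j → ∀ f : S i →ₗ[Λ] S j, f = 0) :
    ∀ x ∈ I, ∀ s : DirectSum (Fin t) S, x • s = 0 := by
  -- Key: a central element of the Jacobson radical kills each brick.
  have key : ∀ z ∈ (Subring.center Λ : Set Λ) ∩ (((⊥ : Ideal Λ).jacobson : Ideal Λ) : Set Λ),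
      ∀ i, ∀ s : S i, z • s = 0 := by
    rintro z ⟨hzc, hzj⟩ i s
    obtain ⟨e⟩ := hbrick i
    have hzc' : ∀ a : Λ, a * z = z * a := Subring.mem_center_iff.mp hzc
    set φ : Module.End Λ (S i) :=
      { toFun := fun v => z • v
        map_add' := fun a b => smul_add z a b
        map_smul' := fun a b => by
          simp only [RingHom.id_apply, smul_smul, hzc' a] } with hφdef
    set c : k := e φ with hc
    have h1 : φ = c • (1 : Module.End Λ (S i)) := by
      have h2 : e.symm c = c • e.symm 1 := by
        rw [← map_smul, smul_eq_mul, mul_one]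
      have := e.symm_apply_apply φ
      rw [← hc] at this
      rw [← this, h2, map_one]
    have hφ : ∀ v : S i, z • v = c • v := by
      intro v
      have : φ v = (c • (1 : Module.End Λ (S i))) v := by rw [← h1]
      simp at this
      exact this
    by_cases hcz : c = 0
    · rw [hφ s, hcz, zero_smul]
    · -- then S i = 0
      have hall : ∀ v : S i, v = 0 := by
        intro v
        set u : Λ := 1 - (algebraMap k Λ) c⁻¹ * z with hu
        have hukill : ∀ v : S i, u • v = 0 := by
          intro v
          have h3 : ((algebraMap k Λ) c⁻¹ * z) • v = v := by
            rw [mul_smul, hφ v, algebraMap_smul, smul_smul, inv_mul_cancel₀ hcz, one_smul]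
          rw [hu, sub_smul, one_smul, h3, sub_self]
        have hspan : Ideal.span {u} = ⊤ := by
          by_contra hne
          obtain ⟨M, hM, hle⟩ := Ideal.exists_le_maximal _ hne
          have hzM : z ∈ M := by
            have hjm : (⊥ : Ideal Λ).jacobson ≤ M := sInf_le ⟨bot_le, hM⟩
            exact hjm hzj
          have huM : u ∈ M := hle (Ideal.subset_span rfl)
          have h1M : (1 : Λ) ∈ M := by
            have : (1 : Λ) = u + (algebraMap k Λ) c⁻¹ * z := by rw [hu, sub_add_cancel]
            rw [this]
            exact M.add_mem huM (M.mul_mem_left _ hzM)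
          exact hM.ne_top ((Ideal.eq_top_iff_one M).mpr h1M)
        have h1span : (1 : Λ) ∈ Ideal.span {u} := hspan ▸ Submodule.mem_top
        obtain ⟨w, hw⟩ := Submodule.mem_span_singleton.mp h1span
        calc v = (1 : Λ) • v := (one_smul _ _).symm
          _ = (w * u) • v := by rw [← hw]; rfl
          _ = w • (u • v) := mul_smul w u v
          _ = 0 := by rw [hukill, smul_zero]
      exact hall _
  intro x hx s
  have hcomp : ∀ i, ∀ v : S i, x • v = 0 := by
    intro i
    have hx' := hI x hx
    refine Submodule.span_induction (p := fun y _ => ∀ v : S i, y • v = 0)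
      (fun z hz v => key z hz i v) (fun v => zero_smul _ _)
      (fun a b _ _ ha hb v => by rw [add_smul, ha, hb, add_zero])
      (fun a b _ hb v => by rw [smul_eq_mul, mul_smul, hb, smul_zero]) hx'
  refine DFinsupp.ext fun i => ?_
  have h4 : (x • s) i = x • s i := DFinsupp.smul_apply x s i
  rw [h4, hcomp i (s i)]
  rfl
end

section
/- Let k be an algebraically closed field of characteristic p > 0, G a finite group, and N a p-subgroup of Z(G). Then the natural full embedding k(G/N)-mod → kG-mod induces a bijection between the set of isomorphism classes of semibricks over k(G/N) and the set of isomorphism classes of semibricks over kG. -/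
set_option linter.unusedVariables false
set_option maxHeartbeats 1000000


/-- `S` is a brick over `Λ` (an algebra over the algebraically closed field `k`):
`End_Λ(S) ≅ k`. -/
def IsBrick (k : Type*) [Field k] (Λ : Type*) [Ring Λ] (S : Type*) [AddCommGroup S]
    [Module Λ S] : Prop :=
  Nonempty (Module.End Λ S ≃+* k)

/-- `S` is a semibrick over `Λ`: it is a direct sum of Hom-orthogonal bricks. -/
def IsSemibrick (k : Type*) [Field k] (Λ : Type*) [Ring Λ] (S : Type*)
    [AddCommGroup S] [Module Λ S] : Prop :=
  ∃ (t : ℕ) (X : Fin t → Submodule Λ S),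
    iSupIndep X ∧ (⨆ i, X i) = ⊤ ∧ (∀ i, IsBrick k Λ (X i)) ∧
    ∀ i j, i ≠ j → ∀ f : (X i) →ₗ[Λ] (X j), f = 0

/-- The natural surjection `kG → k(G/N)`. -/
noncomputable def quotMap (k : Type*) [Field k] (G : Type*) [Group G]
    (N : Subgroup G) [N.Normal] :
    MonoidAlgebra k G →+* MonoidAlgebra k (G ⧸ N) :=
  MonoidAlgebra.mapDomainRingHom k (QuotientGroup.mk' N)

namespace SB

variable {R R' : Type*} [Ring R] [Ring R'] {φ : R →+* R'}
variable {M : Type*} [AddCommGroup M] [Module R M] [Module R' M]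

def toSub' (hsmul : ∀ (r : R) (m : M), r • m = φ r • m) (q : Submodule R' M) :
    Submodule R M where
  carrier := q
  add_mem' := fun h1 h2 => q.add_mem h1 h2
  zero_mem' := q.zero_mem
  smul_mem' := fun r x hx => by
    show r • x ∈ q
    rw [hsmul]; exact q.smul_mem _ hx

def toSub (hφ : Function.Surjective φ) (hsmul : ∀ (r : R) (m : M), r • m = φ r • m)
    (p : Submodule R M) : Submodule R' M where
  carrier := p
  add_mem' := fun h1 h2 => p.add_mem h1 h2
  zero_mem' := p.zero_mem
  smul_mem' := fun r' x hx => by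
    obtain ⟨r, rfl⟩ := hφ r'
    show φ r • x ∈ p
    rw [← hsmul]; exact p.smul_mem r hx

def subEquiv (hφ : Function.Surjective φ) (hsmul : ∀ (r : R) (m : M), r • m = φ r • m) :
    Submodule R' M ≃o Submodule R M where
  toFun := toSub' hsmul
  invFun := toSub hφ hsmul
  left_inv := fun q => SetLike.ext fun x => Iff.rfl
  right_inv := fun p => SetLike.ext fun x => Iff.rfl
  map_rel_iff' := Iff.rfl

variable (hφ : Function.Surjective φ) (hsmul : ∀ (r : R) (m : M), r • m = φ r • m)

def homEquiv (p q : Submodule R' M) :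
    (↥p →ₗ[R'] ↥q) ≃ (↥(toSub' hsmul p) →ₗ[R] ↥(toSub' hsmul q)) where
  toFun f :=
    { toFun := fun x => ⟨(f ⟨x.1, x.2⟩ : M), (f ⟨x.1, x.2⟩).2⟩
      map_add' := fun x y => Subtype.ext
        (congrArg Subtype.val (f.map_add ⟨x.1, x.2⟩ ⟨y.1, y.2⟩))
      map_smul' := fun r x => by
        have h1 : (⟨(r • x).1, (r • x).2⟩ : ↥p) = φ r • (⟨x.1, x.2⟩ : ↥p) :=
          Subtype.ext (hsmul r x.1)
        refine Subtype.ext ?_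
        show (f ⟨(r • x).1, (r • x).2⟩ : M) = r • (f ⟨x.1, x.2⟩ : M)
        rw [h1, f.map_smul, hsmul]
        rfl }
  invFun g :=
    { toFun := fun x => ⟨(g ⟨x.1, x.2⟩ : M), (g ⟨x.1, x.2⟩).2⟩
      map_add' := fun x y => Subtype.ext
        (congrArg Subtype.val (g.map_add ⟨x.1, x.2⟩ ⟨y.1, y.2⟩))
      map_smul' := fun r' x => by
        obtain ⟨r, rfl⟩ := hφ r'
        have h1 : (⟨(φ r • x).1, (φ r • x).2⟩ : ↥(toSub' hsmul p)) =
            r • (⟨x.1, x.2⟩ : ↥(toSub' hsmul p)) := Subtype.ext (hsmul r x.1).symm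
        refine Subtype.ext ?_
        show (g ⟨(φ r • x).1, (φ r • x).2⟩ : M) = φ r • (g ⟨x.1, x.2⟩ : M)
        rw [h1, g.map_smul, ← hsmul]
        rfl }
  left_inv := fun f => by ext x; rfl
  right_inv := fun g => by ext x; rfl

@[simp] lemma homEquiv_zero (p q : Submodule R' M) : homEquiv hφ hsmul p q 0 = 0 := by
  ext x; rfl

@[simp] lemma homEquiv_symm_zero (p q : Submodule R' M) :
    (homEquiv hφ hsmul p q).symm 0 = 0 := by
  ext x; rfl

def endEquiv (p : Submodule R' M) :
    Module.End R' ↥p ≃+* Module.End R ↥(toSub' hsmul p) :=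
  { homEquiv hφ hsmul p p with
    map_add' := fun f g => by ext x; rfl
    map_mul' := fun f g => by ext x; rfl }


include hφ hsmul in
theorem isSemibrick_of (k : Type*) [Field k] (h : IsSemibrick k R' M) :
    IsSemibrick k R M := by
  obtain ⟨t, X, hind, hsup, hbr, horth⟩ := h
  refine ⟨t, fun i => toSub' hsmul (X i), ?_, ?_, ?_, ?_⟩
  · exact hind.map_orderIso (subEquiv hφ hsmul)
  · have h1 := (subEquiv hφ hsmul).map_iSup X
    rw [hsup, OrderIso.map_top] at h1
    exact h1.symm
  · intro i
    obtain ⟨e⟩ := hbr i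
    exact ⟨((endEquiv hφ hsmul (X i)).symm.trans e : Module.End R ↥(toSub' hsmul (X i)) ≃+* k)⟩
  · intro i j hij f
    have h0 : (homEquiv hφ hsmul (X i) (X j)).symm f = 0 := horth i j hij _
    have h2 := congrArg (homEquiv hφ hsmul (X i) (X j)) h0
    rwa [Equiv.apply_symm_apply, homEquiv_zero] at h2

include hφ hsmul in
theorem isSemibrick_to (k : Type*) [Field k] (h : IsSemibrick k R M) :
    IsSemibrick k R' M := by
  obtain ⟨t, Y, hind, hsup, hbr, horth⟩ := h
  have hY : ∀ i, toSub' hsmul (toSub hφ hsmul (Y i)) = Y i :=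
    fun i => (subEquiv hφ hsmul).apply_symm_apply (Y i)
  refine ⟨t, fun i => toSub hφ hsmul (Y i), ?_, ?_, ?_, ?_⟩
  · exact hind.map_orderIso (subEquiv hφ hsmul).symm
  · have h1 := (subEquiv hφ hsmul).symm.map_iSup Y
    rw [hsup, OrderIso.map_top] at h1
    exact h1.symm
  · intro i
    have hb : IsBrick k R ↥(toSub' hsmul (toSub hφ hsmul (Y i))) := by
      rw [hY i]; exact hbr i
    obtain ⟨e⟩ := hb
    exact ⟨((endEquiv hφ hsmul (toSub hφ hsmul (Y i))).trans e :
      Module.End R' ↥(toSub hφ hsmul (Y i)) ≃+* k)⟩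
  · intro i j hij f
    have h0 : homEquiv hφ hsmul (toSub hφ hsmul (Y i)) (toSub hφ hsmul (Y j)) f = 0 := by
      have horth' : ∀ g : ↥(toSub' hsmul (toSub hφ hsmul (Y i))) →ₗ[R]
          ↥(toSub' hsmul (toSub hφ hsmul (Y j))), g = 0 := by
        rw [hY i, hY j]; exact horth i j hij
      exact horth' _
    have h2 := congrArg (homEquiv hφ hsmul (toSub hφ hsmul (Y i))
      (toSub hφ hsmul (Y j))).symm h0
    rwa [Equiv.symm_apply_apply, homEquiv_symm_zero] at h2

include hsmul in
theorem finite_to (h : Module.Finite R M) : Module.Finite R' M := by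
  obtain ⟨s, hs⟩ := h.fg_top
  refine ⟨⟨s, ?_⟩⟩
  have hle : (⊤ : Submodule R M) ≤ toSub' hsmul (Submodule.span R' ↑s) := by
    rw [← hs]
    exact Submodule.span_le.mpr Submodule.subset_span
  exact top_le_iff.mp (fun x hx => hle (Submodule.mem_top) : _)

include hφ hsmul in
theorem finite_of (h : Module.Finite R' M) : Module.Finite R M := by
  obtain ⟨s, hs⟩ := h.fg_top
  refine ⟨⟨s, ?_⟩⟩
  have hle : (⊤ : Submodule R' M) ≤ toSub hφ hsmul (Submodule.span R ↑s) := by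
    rw [← hs]
    exact Submodule.span_le.mpr Submodule.subset_span
  exact top_le_iff.mp (fun x hx => hle (Submodule.mem_top) : _)

variable {M₂ : Type*} [AddCommGroup M₂] [Module R M₂] [Module R' M₂]

def equivTo (hsmul₂ : ∀ (r : R) (m : M₂), r • m = φ r • m) (e : M ≃ₗ[R'] M₂) :
    M ≃ₗ[R] M₂ :=
  { e.toAddEquiv with
    map_smul' := fun r x => by
      show e (r • x) = r • e x
      rw [hsmul r x, hsmul₂ r (e x), e.map_smul] }

def equivOf (hsmul₂ : ∀ (r : R) (m : M₂), r • m = φ r • m) (e : M ≃ₗ[R] M₂) :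
    M ≃ₗ[R'] M₂ :=
  { e.toAddEquiv with
    map_smul' := fun r' x => by
      obtain ⟨r, rfl⟩ := hφ r'
      show e (φ r • x) = φ r • e x
      rw [← hsmul r x, ← hsmul₂ r (e x), e.map_smul] }

end SB


namespace SB2
open MonoidAlgebra

variable {k : Type*} [Field k] {G : Type*} [Group G]

lemma single_center (n : G) (hn : n ∈ Subgroup.center G) (a : MonoidAlgebra k G) :
    single n (1 : k) * a = a * single n (1 : k) := by
  induction a using MonoidAlgebra.induction_on with
  | of g =>
    show single n (1:k) * single g 1 = single g 1 * single n (1:k)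
    rw [single_mul_single, single_mul_single, (Subgroup.mem_center_iff.mp hn g)]
  | add f g hf hg => rw [mul_add, add_mul, hf, hg]
  | smul r f hf => rw [mul_smul_comm, smul_mul_assoc, hf]

lemma brick_eq_one {p : ℕ} [Fact p.Prime] [CharP k p]
    {R M : Type*} [Ring R] [AddCommGroup M] [Module R M] (hbr : IsBrick k R M)
    (A : Module.End R M) (j : ℕ) (hA : A ^ p ^ j = 1) : A = 1 := by
  obtain ⟨e⟩ := hbr
  have h1 : (e A) ^ p ^ j = 1 := by rw [← map_pow, hA, map_one]
  have h2 : (e A - 1) ^ p ^ j = 0 := by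
    rw [sub_pow_char_pow, h1, one_pow, sub_self]
  have h3 : e A - 1 = 0 :=
    pow_eq_zero_iff (pow_ne_zero j (Fact.out : p.Prime).ne_zero) |>.mp h2
  have h4 : e A = e 1 := by rw [map_one, ← sub_eq_zero]; exact h3
  exact e.injective h4

lemma semibrick_single_smul {p : ℕ} [Fact p.Prime] [CharP k p]
    {M : Type*} [AddCommGroup M] [Module (MonoidAlgebra k G) M]
    (hsb : IsSemibrick k (MonoidAlgebra k G) M)
    {n : G} (hn : n ∈ Subgroup.center G) {j : ℕ} (hj : n ^ p ^ j = 1) :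
    ∀ m : M, single n (1 : k) • m = m := by
  obtain ⟨t, X, hind, hsup, hbr, horth⟩ := hsb
  set c : MonoidAlgebra k G := single n 1 with hc
  have hcen : ∀ a, c * a = a * c := single_center n hn
  have hcpow : c ^ p ^ j = 1 := by
    rw [hc, single_pow, hj, one_pow, ← one_def]
  let D : M →ₗ[MonoidAlgebra k G] M :=
    { toFun := fun m => c • m
      map_add' := fun x y => smul_add c x y
      map_smul' := fun a m => by
        show c • a • m = a • c • m
        rw [← mul_smul, hcen a, mul_smul] }
  have hXfix : ∀ i, ∀ x : M, x ∈ X i → c • x = x := by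
    intro i
    have hmem : ∀ x ∈ X i, D x ∈ X i := fun x hx => (X i).smul_mem c hx
    set A : Module.End (MonoidAlgebra k G) ↥(X i) := D.restrict hmem with hA
    have hpow : ∀ (e : ℕ) (x : ↥(X i)), ((A ^ e) x : M) = c ^ e • (x : M) := by
      intro e
      induction e with
      | zero => intro x; simp
      | succ e ih =>
        intro x
        rw [pow_succ, Module.End.mul_apply, ih (A x)]
        have hAx : ((A x : ↥(X i)) : M) = c • (x : M) := rfl
        rw [hAx, ← mul_smul, ← pow_succ]
    have hA1 : A ^ p ^ j = 1 := by
      apply LinearMap.ext; intro x; apply Subtype.ext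
      rw [hpow, hcpow, one_smul]; rfl
    have hAone : A = 1 := brick_eq_one (hbr i) A j hA1
    intro x hx
    have h5 := congrArg (fun f : Module.End (MonoidAlgebra k G) ↥(X i) =>
      ((f ⟨x, hx⟩ : ↥(X i)) : M)) hAone
    exact h5
  have hker : ∀ i, X i ≤ LinearMap.ker (D - LinearMap.id) := by
    intro i x hx
    rw [LinearMap.mem_ker, LinearMap.sub_apply, LinearMap.id_apply, sub_eq_zero]
    exact hXfix i x hx
  have htop : (⊤ : Submodule (MonoidAlgebra k G) M) ≤ LinearMap.ker (D - LinearMap.id) := by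
    rw [← hsup]; exact iSup_le hker
  intro m
  have h6 := htop (Submodule.mem_top : m ∈ (⊤ : Submodule (MonoidAlgebra k G) M))
  rw [LinearMap.mem_ker, LinearMap.sub_apply, LinearMap.id_apply, sub_eq_zero] at h6
  exact h6

variable (N : Subgroup G) [N.Normal]

lemma quotMap_surjective : Function.Surjective (quotMap k G N) := by
  intro x
  refine ⟨MonoidAlgebra.ofCoeff (Finsupp.mapDomain Quotient.out x.coeff), ?_⟩
  show MonoidAlgebra.ofCoeff (Finsupp.mapDomain (⇑(QuotientGroup.mk' N)) (Finsupp.mapDomain Quotient.out x.coeff)) = x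
  rw [← Finsupp.mapDomain_comp]
  have h : (⇑(QuotientGroup.mk' N) ∘ Quotient.out) = id := by
    funext q
    exact Quotient.out_eq' q
  rw [h, Finsupp.mapDomain_id, MonoidAlgebra.ofCoeff_coeff]

lemma ker_smul_eq_zero {M : Type*} [AddCommGroup M] [Module (MonoidAlgebra k G) M]
    (htriv : ∀ n ∈ N, ∀ m : M, single (n : G) (1 : k) • m = m)
    (a : MonoidAlgebra k G) (ha : quotMap k G N a = 0) (m : M) : a • m = 0 := by
  classical
  set f : G → G ⧸ N := ⇑(QuotientGroup.mk' N) with hf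
  set s : G ⧸ N → G := Quotient.out with hs
  set gens : Set (MonoidAlgebra k G) :=
    {x : MonoidAlgebra k G | ∃ g : G, x = single g (1 : k) - single (s (f g)) (1 : k)}
    with hgens
  set P : MonoidAlgebra k G → MonoidAlgebra k G :=
    fun b => MonoidAlgebra.mapDomain (fun g => s (f g)) b with hPdef
  have hPadd : ∀ u v : MonoidAlgebra k G, P (u + v) = P u + P v := by
    intro u v
    show MonoidAlgebra.mapDomain (fun g => s (f g)) (u + v : MonoidAlgebra k G)
      = _
    rw [MonoidAlgebra.mapDomain_add]
  have hPsingle : ∀ (g : G) (b : k), P (single g b) = single (s (f g)) b := by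
    intro g b
    show MonoidAlgebra.mapDomain (fun g => s (f g)) (single g b) = _
    rw [MonoidAlgebra.mapDomain_single]
  have hPsmul : ∀ (r : k) (u : MonoidAlgebra k G), P (r • u) = r • P u := by
    intro r u
    show MonoidAlgebra.mapDomain (fun g => s (f g)) (r • u : MonoidAlgebra k G)
      = _
    rw [MonoidAlgebra.mapDomain_smul]
  have key : ∀ b : MonoidAlgebra k G, b - P b ∈ Submodule.span k gens := by
    intro b
    induction b using MonoidAlgebra.induction_on with
    | of g =>
      rw [MonoidAlgebra.of_apply, hPsingle]
      exact Submodule.subset_span ⟨g, rfl⟩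
    | add u v hu hv =>
      rw [hPadd]
      have : u + v - (P u + P v) = (u - P u) + (v - P v) := by abel
      rw [this]
      exact Submodule.add_mem _ hu hv
    | smul r u hu =>
      rw [hPsmul]
      have : r • u - r • P u = r • (u - P u) := by rw [smul_sub]
      rw [this]
      exact Submodule.smul_mem _ r hu
  have hgen0 : ∀ x ∈ gens, x • m = 0 := by
    rintro x ⟨g, rfl⟩
    have hq : ((g : G ⧸ N)) = ((s (f g) : G) : G ⧸ N) := by
      have : ((s (f g) : G) : G ⧸ N) = f g := Quotient.out_eq' (f g)
      rw [this]; rfl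
    have hmem : g⁻¹ * s (f g) ∈ N := QuotientGroup.eq.mp hq
    have hmul : single (s (f g)) (1 : k) =
        single g (1 : k) * single (g⁻¹ * s (f g)) (1 : k) := by
      rw [single_mul_single, mul_one, mul_inv_cancel_left]
    rw [sub_smul, hmul, mul_smul, htriv _ hmem, sub_self]
  have hspan : ∀ x ∈ Submodule.span k gens, x • m = 0 := by
    intro x hx
    induction hx using Submodule.span_induction with
    | mem x hx => exact hgen0 x hx
    | zero => exact zero_smul _ m
    | add x y hx hy hx0 hy0 => rw [add_smul, hx0, hy0, add_zero]
    | smul c x hx hx0 => rw [Algebra.smul_def, mul_smul, hx0, smul_zero]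
  have hP : P a = 0 := by
    have h1 : MonoidAlgebra.mapDomain (fun g => s (f g)) a
        = MonoidAlgebra.mapDomain s (MonoidAlgebra.mapDomain f a) := by
      show MonoidAlgebra.ofCoeff (Finsupp.mapDomain (fun g => s (f g)) a.coeff)
        = MonoidAlgebra.ofCoeff (Finsupp.mapDomain s (Finsupp.mapDomain f a.coeff))
      rw [← Finsupp.mapDomain_comp]
      rfl
    have h2 : MonoidAlgebra.mapDomain f a = 0 := ha
    show MonoidAlgebra.mapDomain (fun g => s (f g)) a = 0
    rw [h1, h2, MonoidAlgebra.mapDomain_zero]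
  calc a • m = (a - P a) • m := by rw [hP, sub_zero]
  _ = 0 := hspan _ (key a)

end SB2


/-- Let `k` be an algebraically closed field of characteristic
`p > 0`, `G` a finite group and `N` a `p`-subgroup of the center `Z(G)`.  Then the
natural full embedding `k(G/N)-mod → kG-mod` (restriction of scalars along
`kG → k(G/N)`) induces a bijection between the isomorphism classes of semibricks over
`k(G/N)` and the isomorphism classes of semibricks over `kG`. -/
theorem stmt_16 (k : Type) [Field k] [IsAlgClosed k] (p : ℕ) [Fact p.Prime] [CharP k p]
    (G : Type) [Group G] [Fintype G]
    (N : Subgroup G) [N.Normal] (hNZ : N ≤ Subgroup.center G) (hN : IsPGroup p N) :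
    -- the embedding sends semibricks over `k(G/N)` to semibricks over `kG`:
    (∀ S' : ModuleCat (MonoidAlgebra k (G ⧸ N)),
      Module.Finite (MonoidAlgebra k (G ⧸ N)) S' →
      IsSemibrick k (MonoidAlgebra k (G ⧸ N)) S' →
      Module.Finite (MonoidAlgebra k G)
          ((ModuleCat.restrictScalars (quotMap k G N)).obj S') ∧
        IsSemibrick k (MonoidAlgebra k G)
          ((ModuleCat.restrictScalars (quotMap k G N)).obj S')) ∧
    -- it is surjective on isomorphism classes of semibricks:
    (∀ S : ModuleCat (MonoidAlgebra k G),
      Module.Finite (MonoidAlgebra k G) S → IsSemibrick k (MonoidAlgebra k G) S →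
      ∃ S' : ModuleCat (MonoidAlgebra k (G ⧸ N)),
        Module.Finite (MonoidAlgebra k (G ⧸ N)) S' ∧
        IsSemibrick k (MonoidAlgebra k (G ⧸ N)) S' ∧
        Nonempty ((((ModuleCat.restrictScalars (quotMap k G N)).obj S') : Type)
          ≃ₗ[MonoidAlgebra k G] (S : Type))) ∧
    -- it is injective on isomorphism classes of semibricks:
    (∀ S' T' : ModuleCat (MonoidAlgebra k (G ⧸ N)),
      Module.Finite (MonoidAlgebra k (G ⧸ N)) S' →
      IsSemibrick k (MonoidAlgebra k (G ⧸ N)) S' →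
      Module.Finite (MonoidAlgebra k (G ⧸ N)) T' →
      IsSemibrick k (MonoidAlgebra k (G ⧸ N)) T' →
      (Nonempty ((((ModuleCat.restrictScalars (quotMap k G N)).obj S') : Type)
          ≃ₗ[MonoidAlgebra k G]
            (((ModuleCat.restrictScalars (quotMap k G N)).obj T') : Type)) ↔
        Nonempty ((S' : Type) ≃ₗ[MonoidAlgebra k (G ⧸ N)] (T' : Type)))) := by
  classical
  have hφ : Function.Surjective (quotMap k G N) := SB2.quotMap_surjective N
  refine ⟨?_, ?_, ?_⟩
  · -- part 1
    intro S' hfin hsb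
    letI : Module (MonoidAlgebra k (G ⧸ N))
        ↥((ModuleCat.restrictScalars (quotMap k G N)).obj S') :=
      inferInstanceAs (Module (MonoidAlgebra k (G ⧸ N)) ↥S')
    have hsmul : ∀ (r : MonoidAlgebra k G)
        (m : ↥((ModuleCat.restrictScalars (quotMap k G N)).obj S')),
        r • m = quotMap k G N r • m := fun r m => rfl
    refine ⟨SB.finite_of hφ hsmul ?_, SB.isSemibrick_of hφ hsmul k ?_⟩
    · exact hfin
    · exact hsb
  · -- part 2
    intro S hfin hsb
    have htriv : ∀ n ∈ N, ∀ m : ↥S, MonoidAlgebra.single (n : G) (1 : k) • m = m := by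
      intro n hn m
      obtain ⟨j, hj⟩ := hN ⟨n, hn⟩
      have hj' : (n : G) ^ p ^ j = 1 := by
        have h := congrArg (Subtype.val : ↥N → G) hj
        simpa using h
      exact SB2.semibrick_single_smul hsb (hNZ hn) hj' m
    have hann : ∀ a, quotMap k G N a = 0 → ∀ m : ↥S, a • m = 0 := fun a ha m =>
      SB2.ker_smul_eq_zero N htriv a ha m
    letI smulR' : SMul (MonoidAlgebra k (G ⧸ N)) ↥S := ⟨fun r' m => (hφ r').choose • m⟩
    have hcomp : ∀ (r : MonoidAlgebra k G) (m : ↥S), quotMap k G N r • m = r • m := by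
      intro r m
      show (hφ (quotMap k G N r)).choose • m = r • m
      have h1 : quotMap k G N ((hφ (quotMap k G N r)).choose - r) = 0 := by
        rw [map_sub, (hφ (quotMap k G N r)).choose_spec, sub_self]
      have h2 := hann _ h1 m
      rwa [sub_smul, sub_eq_zero] at h2
    letI modR' : Module (MonoidAlgebra k (G ⧸ N)) ↥S :=
      hφ.moduleLeft (quotMap k G N) hcomp
    have hsmul : ∀ (r : MonoidAlgebra k G) (m : ↥S),
        r • m = quotMap k G N r • m := fun r m => (hcomp r m).symm
    letI : Module (MonoidAlgebra k G) ↥(ModuleCat.of (MonoidAlgebra k (G ⧸ N)) ↥S) :=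
      inferInstanceAs (Module (MonoidAlgebra k G) ↥S)
    letI : Module (MonoidAlgebra k (G ⧸ N)) ↥(ModuleCat.of (MonoidAlgebra k (G ⧸ N)) ↥S) :=
      inferInstanceAs (Module (MonoidAlgebra k (G ⧸ N)) ↥S)
    refine ⟨ModuleCat.of (MonoidAlgebra k (G ⧸ N)) ↥S, ?_, ?_, ?_⟩
    · exact SB.finite_to hsmul hfin
    · exact SB.isSemibrick_to hφ hsmul k hsb
    · have E : (↥((ModuleCat.restrictScalars (quotMap k G N)).obj
          (ModuleCat.of (MonoidAlgebra k (G ⧸ N)) ↥S)) ≃ₗ[MonoidAlgebra k G] ↥S) :=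
        { toFun := fun m => m
          invFun := fun m => m
          left_inv := fun _ => rfl
          right_inv := fun _ => rfl
          map_add' := fun _ _ => rfl
          map_smul' := fun r m => hcomp r m }
      exact ⟨E⟩
  · -- part 3
    intro S' T' hfs hsbs hft hsbt
    letI : Module (MonoidAlgebra k (G ⧸ N))
        ↥((ModuleCat.restrictScalars (quotMap k G N)).obj S') :=
      inferInstanceAs (Module (MonoidAlgebra k (G ⧸ N)) ↥S')
    letI : Module (MonoidAlgebra k (G ⧸ N))
        ↥((ModuleCat.restrictScalars (quotMap k G N)).obj T') :=
      inferInstanceAs (Module (MonoidAlgebra k (G ⧸ N)) ↥T')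
    letI : Module (MonoidAlgebra k G) ↥S' :=
      (inferInstance : Module (MonoidAlgebra k G)
        ↥((ModuleCat.restrictScalars (quotMap k G N)).obj S'))
    letI : Module (MonoidAlgebra k G) ↥T' :=
      (inferInstance : Module (MonoidAlgebra k G)
        ↥((ModuleCat.restrictScalars (quotMap k G N)).obj T'))
    have hsmulS : ∀ (r : MonoidAlgebra k G)
        (m : ↥((ModuleCat.restrictScalars (quotMap k G N)).obj S')),
        r • m = quotMap k G N r • m := fun r m => rfl
    have hsmulT : ∀ (r : MonoidAlgebra k G)
        (m : ↥((ModuleCat.restrictScalars (quotMap k G N)).obj T')),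
        r • m = quotMap k G N r • m := fun r m => rfl
    constructor
    · rintro ⟨e⟩
      exact ⟨SB.equivOf hφ hsmulS hsmulT e⟩
    · rintro ⟨e⟩
      exact ⟨SB.equivTo hsmulS hsmulT e⟩
end
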